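/- Let k and m be positive integers with 2 + 2·log₂(m) ≤ ⌈m/k⌉. If H is a simple graph with chromatic number χ(H) > k, then the dichromatic number of the blow-up H^(m) satisfies χ⃗(H^(m)) > k. -/

import Mathlib

/-- An orientation of a simple graph `G`: a relation choosing exactly one
direction for each edge of `G` (and relating no non-adjacent pair). -/
def IsOrientation {V : Type*} (G : SimpleGraph V) (D : V → V → Prop) : Prop :=
  (∀ u v, D u v → G.Adj u v) ∧ ∀ u v, G.Adj u v → (D u v ↔ ¬ D v u)

/-- A set `A` of vertices is acyclic for the digraph `D` if the digraph induced
on `A` contains no directed cycle (no vertex reaches itself by a nonempty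
directed walk inside `A`). -/
def IsAcyclicOn {V : Type*} (D : V → V → Prop) (A : Set V) : Prop :=
  ∀ x ∈ A, ¬ Relation.TransGen (fun a b => a ∈ A ∧ b ∈ A ∧ D a b) x x

/-- A set `A` of vertices contains a directed cycle of the digraph `D`. -/
def HasDirCycleOn {V : Type*} (D : V → V → Prop) (A : Set V) : Prop :=
  ∃ x ∈ A, Relation.TransGen (fun a b => a ∈ A ∧ b ∈ A ∧ D a b) x x

/-- The chromatic number of a digraph `D`: the minimum number of acyclic
vertex-sets whose union is the whole vertex set. -/
noncomputable def digraphChrom {V : Type*} (D : V → V → Prop) : ℕ :=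
  sInf {k : ℕ | ∃ f : V → Fin k, ∀ i : Fin k, IsAcyclicOn D {v | f v = i}}

/-- The dichromatic number of an undirected graph: the maximum chromatic number
over all orientations of its edges. -/
noncomputable def dichromatic {V : Type*} (G : SimpleGraph V) : ℕ :=
  sSup {k : ℕ | ∃ D : V → V → Prop, IsOrientation G D ∧ k = digraphChrom D}

/-- The blow-up of a simple graph `H` with power `m`: each vertex is replaced by
an independent set of size `m`, each edge by a complete bipartite graph `K_{m,m}`. -/
def blowup {α : Type*} (H : SimpleGraph α) (m : ℕ) : SimpleGraph (α × Fin m) where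
  Adj a b := H.Adj a.1 b.1
  symm := ⟨fun _ _ h => H.adj_symm h⟩
  loopless := ⟨fun a h => H.irrefl h⟩

open Finset
open scoped Nat

/-!
Let `t = ⌈m/k⌉`. Counting gives a pattern `W` on `Fin m × Fin m` such that every pair of
`t`-sets `A, B` spans a directed 4-cycle of the bipartite tournament `W`: without one, the rows
of `A × B` are nested, so the board is determined by its row degrees and an ordering of `B` by
column degree, at most `(t+1)^t t!` boards out of `2^(t²)`. The union bound over the `C(m,t)²`
pairs works because `(t+1)^t t! ≤ t!² C(2t,t) < t!² 4^t` and `4m² ≤ 2^t`.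

Orient every `K_{m,m}` of `H^(m)` by `W`, from the smaller to the larger blob in a linear order
of `V(H)`. In an acyclic colouring with at most `k` colours each blob has a colour class with at
least `t` vertices, since `k(t-1) < m`. Giving each vertex of `H` such a colour is a proper
colouring: two adjacent vertices with the same colour would span a monochromatic directed
4-cycle. So `χ(H) ≤ k`.
-/

section FourCycle

variable {α β : Type*}

/-- `W x y` orients the edge `xy` from `x` to `y`; this asks for a directed 4-cycle
`x → y → x' → y' → x`. -/
def HasFourCycle (W : α → β → Bool) (A : Finset α) (B : Finset β) : Prop :=
  ∃ x ∈ A, ∃ x' ∈ A, ∃ y ∈ B, ∃ y' ∈ B,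
    W x y = true ∧ W x' y = false ∧ W x' y' = true ∧ W x y' = false

variable {W : α → β → Bool} {A A' : Finset α} {B B' : Finset β}

instance : Decidable (HasFourCycle W A B) := by
  unfold HasFourCycle; infer_instance

theorem HasFourCycle.mono (h : HasFourCycle W A' B') (hA : A' ⊆ A) (hB : B' ⊆ B) :
    HasFourCycle W A B := by
  obtain ⟨x, hx, x', hx', y, hy, y', hy', hW⟩ := h
  exact ⟨x, hA hx, x', hA hx', y, hB hy, y', hB hy', hW⟩

theorem apply_of_not_hasFourCycle_of_card_le (h : ¬HasFourCycle W A B) {y y' : β}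
    (hy : y ∈ B) (hy' : y' ∈ B) (hdeg : #{x ∈ A | W x y} ≤ #{x ∈ A | W x y'})
    {x : α} (hx : x ∈ A) (hxy : W x y = true) : W x y' = true := by
  classical
  by_contra hxy'
  obtain ⟨x', hx'y', hx'y⟩ := exists_mem_notMem_of_card_lt_card
    ((card_erase_lt_of_mem (mem_filter.2 ⟨hx, hxy⟩)).trans_le hdeg)
  simp only [mem_filter, mem_erase, not_and] at hx'y' hx'y
  have hne : x' ≠ x := by rintro rfl; exact hxy' hx'y'.2
  exact h ⟨x, hx, x', hx'y'.1, y, hy, y', hy', hxy, by simpa using hx'y hne hx'y'.1, hx'y'.2,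
    by simpa using hxy'⟩

end FourCycle

section Rank

variable {β γ : Type*} [LinearOrder γ] {f : β → γ} {B : Finset β} {y : β}

def rankBy (f : β → γ) (B : Finset β) (y : β) : ℕ := #{y' ∈ B | f y' < f y}

theorem rankBy_lt_card (hy : y ∈ B) : rankBy f B y < #B :=
  card_lt_card <| (filter_ssubset).2 ⟨y, hy, lt_irrefl _⟩

theorem rankBy_injOn (hf : Function.Injective f) : Set.InjOn (rankBy f B) B := by
  have hmono {y y' : β} (hy : y ∈ B) (hlt : f y < f y') : rankBy f B y < rankBy f B y' :=
    card_lt_card <| (ssubset_iff_of_subset fun z hz =>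
        mem_filter.2 ⟨(mem_filter.1 hz).1, (mem_filter.1 hz).2.trans hlt⟩).2
      ⟨y, mem_filter.2 ⟨hy, hlt⟩, fun h => lt_irrefl _ (mem_filter.1 h).2⟩
  intro y hy y' hy' h
  by_contra hne
  rcases (hf.ne hne).lt_or_gt with hlt | hlt
  · exact (hmono hy hlt).ne h
  · exact (hmono hy' hlt).ne' h

theorem rankBy_lt_card_iff (hf : Function.Injective f) {S : Finset β} (hSB : S ⊆ B)
    (hS : ∀ y ∈ S, ∀ y' ∈ B, f y' < f y → y' ∈ S) (hy : y ∈ B) :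
    rankBy f B y < #S ↔ y ∈ S := by
  constructor
  · intro hlt
    by_contra hyS
    refine hlt.not_ge (card_le_card fun y' hy' => mem_filter.2 ⟨hSB hy', ?_⟩)
    rcases lt_trichotomy (f y') (f y) with h | h | h
    · exact h
    · exact absurd (hf h ▸ hy') hyS
    · exact absurd (hS y' hy' y hy h) hyS
  · intro hyS
    refine card_lt_card <| (ssubset_iff_of_subset fun y' hy' => ?_).2
      ⟨y, hyS, fun h => lt_irrefl _ (mem_filter.1 h).2⟩
    exact hS y hyS y' (mem_filter.1 hy').1 (mem_filter.1 hy').2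

end Rank

section Counting

variable {m t : ℕ}

/-- Without a directed 4-cycle the columns are nested too, so every row is an initial segment
of `B` in this order. -/
def columnKey (W : Fin m → Fin m → Bool) (A : Finset (Fin m)) (y : Fin m) : ℕᵒᵈ ×ₗ Fin m :=
  toLex (OrderDual.toDual #{x ∈ A | W x y}, y)

theorem columnKey_injective (W : Fin m → Fin m → Bool) (A : Finset (Fin m)) :
    Function.Injective (columnKey W A) := fun _ _ h => congrArg (fun p => (ofLex p).2) h

theorem apply_iff_rankBy_lt_of_not_hasFourCycle {W : Fin m → Fin m → Bool}
    {A B : Finset (Fin m)} (h : ¬HasFourCycle W A B) {x y : Fin m} (hx : x ∈ A) (hy : y ∈ B) :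
    W x y = true ↔ rankBy (columnKey W A) B y < #{y' ∈ B | W x y'} := by
  rw [rankBy_lt_card_iff (columnKey_injective W A) (filter_subset _ _) ?_ hy, mem_filter,
    and_iff_right hy]
  intro z hz z' hz' hlt
  rw [mem_filter] at hz ⊢
  exact ⟨hz', apply_of_not_hasFourCycle_of_card_le h hz.1 hz'
    (OrderDual.toDual_le_toDual.1 (Prod.Lex.monotone_fst _ _ hlt.le)) hx hz.2⟩

theorem card_not_hasFourCycle_mul_le {A B : Finset (Fin m)} (hA : #A = t) (hB : #B = t) :
    #{W : Fin m → Fin m → Bool | ¬HasFourCycle W A B} * 2 ^ (t * t) ≤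
      (t + 1) ^ t * t ! * 2 ^ (m * m) := by
  classical
  have hrow (W : Fin m → Fin m → Bool) (x : A) : #{y ∈ B | W x y} < t + 1 :=
    Nat.lt_succ_of_le (hB ▸ card_filter_le _ _)
  have hrank (W : Fin m → Fin m → Bool) (y : B) : rankBy (columnKey W A) B y < t :=
    hB ▸ rankBy_lt_card y.2
  let encode (W : Fin m → Fin m → Bool) :
      (A → Fin (t + 1)) × (B ↪ Fin t) × ({p // p ∉ A ×ˢ B} → Bool) :=
    (fun x => ⟨_, hrow W x⟩,
      ⟨fun y => ⟨_, hrank W y⟩, fun y y' h =>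
        Subtype.ext <| rankBy_injOn (columnKey_injective W A) y.2 y'.2 (Fin.mk.inj_iff.1 h)⟩,
      fun p => W p.1.1 p.1.2)
  have hinj : Set.InjOn encode {W | ¬HasFourCycle W A B} := by
    intro W hW W' hW' h
    funext x y
    by_cases hxy : (x, y) ∈ A ×ˢ B
    · obtain ⟨hx, hy⟩ : x ∈ A ∧ y ∈ B := mem_product.1 hxy
      have hdeg : #{y ∈ B | W x y} = #{y ∈ B | W' x y} :=
        congrArg (fun e => ((e.1 ⟨x, hx⟩ : Fin (t + 1)) : ℕ)) h
      have hrk : rankBy (columnKey W A) B y = rankBy (columnKey W' A) B y :=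
        congrArg (fun e => ((e.2.1 ⟨y, hy⟩ : Fin t) : ℕ)) h
      rw [Bool.eq_iff_iff, apply_iff_rankBy_lt_of_not_hasFourCycle hW hx hy,
        apply_iff_rankBy_lt_of_not_hasFourCycle hW' hx hy, hdeg, hrk]
    · exact congrArg (fun e => e.2.2 ⟨(x, y), hxy⟩) h
  have htm : t ≤ m := by simpa [hA] using card_le_univ A
  calc _ ≤ Fintype.card ((A → Fin (t + 1)) × (B ↪ Fin t) × ({p // p ∉ A ×ˢ B} → Bool)) *
        2 ^ (t * t) :=
        Nat.mul_le_mul_right _ <| card_le_card_of_injOn encode (fun _ _ => mem_univ _)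
          fun W hW W' hW' => hinj (mem_filter.1 hW).2 (mem_filter.1 hW').2
    _ = (t + 1) ^ t * t ! * 2 ^ (m * m) := by
      simp only [Fintype.card_prod, Fintype.card_fun, Fintype.card_embedding_eq,
        Fintype.card_coe, Fintype.card_subtype_compl, card_product, Fintype.card_fin,
        Fintype.card_bool, hA, hB, Nat.descFactorial_self]
      rw [mul_assoc, mul_assoc, ← pow_add, Nat.sub_add_cancel (Nat.mul_le_mul htm htm), ← mul_assoc]

theorem choose_sq_mul_lt_two_pow (hm : 0 < m) (h : 4 * m ^ 2 ≤ 2 ^ t) :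
    m.choose t ^ 2 * ((t + 1) ^ t * t !) < 2 ^ (t * t) := by
  have ht : t ≠ 0 := by
    rintro rfl
    rw [pow_zero] at h
    nlinarith
  have hpow : (t + 1) ^ t ≤ t ! * t.centralBinom := by
    rw [Nat.centralBinom_eq_two_mul_choose, ← Nat.descFactorial_eq_factorial_mul_choose]
    convert Nat.pow_sub_le_descFactorial (2 * t) t using 2
    omega
  calc m.choose t ^ 2 * ((t + 1) ^ t * t !)
      ≤ m.choose t ^ 2 * (t ! * t.centralBinom * t !) := by gcongr
    _ = m.descFactorial t ^ 2 * t.centralBinom := by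
      rw [Nat.descFactorial_eq_factorial_mul_choose]; ring
    _ ≤ (m ^ t) ^ 2 * t.centralBinom := by gcongr; exact Nat.descFactorial_le_pow m t
    _ < (m ^ t) ^ 2 * 4 ^ t := by gcongr; exact Nat.centralBinom_lt_four_pow ht
    _ = (4 * m ^ 2) ^ t := by ring
    _ ≤ (2 ^ t) ^ t := by gcongr
    _ = 2 ^ (t * t) := (pow_mul 2 t t).symm

theorem exists_forall_hasFourCycle (hm : 0 < m) (h : 4 * m ^ 2 ≤ 2 ^ t) :
    ∃ W : Fin m → Fin m → Bool,
      ∀ A B : Finset (Fin m), t ≤ #A → t ≤ #B → HasFourCycle W A B := by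
  let pairs :=
    powersetCard t (univ : Finset (Fin m)) ×ˢ powersetCard t (univ : Finset (Fin m))
  let bad := pairs.biUnion fun AB =>
    ({W | ¬HasFourCycle W AB.1 AB.2} : Finset (Fin m → Fin m → Bool))
  have hbad : #bad * 2 ^ (t * t) < #(univ : Finset (Fin m → Fin m → Bool)) * 2 ^ (t * t) :=
    calc #bad * 2 ^ (t * t)
        ≤ ∑ AB ∈ pairs,
            #{W : Fin m → Fin m → Bool | ¬HasFourCycle W AB.1 AB.2} * 2 ^ (t * t) := by
          rw [← sum_mul]; gcongr; exact card_biUnion_le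
      _ ≤ ∑ _AB ∈ pairs, (t + 1) ^ t * t ! * 2 ^ (m * m) := sum_le_sum fun AB hAB =>
          card_not_hasFourCycle_mul_le (mem_powersetCard.1 (mem_product.1 hAB).1).2
            (mem_powersetCard.1 (mem_product.1 hAB).2).2
      _ = m.choose t ^ 2 * ((t + 1) ^ t * t !) * 2 ^ (m * m) := by
          simp only [sum_const, pairs, card_product, card_powersetCard, card_univ,
            Fintype.card_fin, smul_eq_mul]
          ring
      _ < 2 ^ (t * t) * 2 ^ (m * m) := by gcongr; exact choose_sq_mul_lt_two_pow hm h
      _ = #(univ : Finset (Fin m → Fin m → Bool)) * 2 ^ (t * t) := by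
          rw [card_univ, Fintype.card_fun, Fintype.card_fun, Fintype.card_bool, Fintype.card_fin,
            ← pow_mul, mul_comm]
  obtain ⟨W, -, hW⟩ := exists_mem_notMem_of_card_lt_card (Nat.lt_of_mul_lt_mul_right hbad)
  refine ⟨W, fun A B hA hB => ?_⟩
  obtain ⟨A', hA'A, hA'⟩ := exists_subset_card_eq hA
  obtain ⟨B', hB'B, hB'⟩ := exists_subset_card_eq hB
  refine HasFourCycle.mono (by_contra fun hc => hW (mem_biUnion.2 ⟨(A', B'), ?_, ?_⟩)) hA'A hB'B
  · simp [pairs, hA', hB']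
  · simpa using hc

end Counting

section Dichromatic

variable {V : Type*} {D : V → V → Prop}

theorem IsOrientation.irrefl {G : SimpleGraph V} (hD : IsOrientation G D) (v : V) : ¬D v v :=
  fun h => G.irrefl (hD.1 v v h)

theorem isAcyclicOn_of_subsingleton (hD : ∀ v, ¬D v v) {s : Set V} (hs : s.Subsingleton) :
    IsAcyclicOn D s := by
  intro x _ hcyc
  obtain ⟨y, -, hy, hx, hyx⟩ := Relation.TransGen.tail'_iff.1 hcyc
  exact hD y (hs hy hx ▸ hyx)

variable [Fintype V]

theorem exists_isAcyclicOn_fiber_card (hD : ∀ v, ¬D v v) :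
    ∃ f : V → Fin (Fintype.card V), ∀ i, IsAcyclicOn D {v | f v = i} :=
  ⟨Fintype.equivFin V, fun _ => isAcyclicOn_of_subsingleton hD fun _ ha _ hb =>
    (Fintype.equivFin V).injective (ha.trans hb.symm)⟩

theorem digraphChrom_le_card (hD : ∀ v, ¬D v v) : digraphChrom D ≤ Fintype.card V :=
  Nat.sInf_le (exists_isAcyclicOn_fiber_card hD)

theorem lt_digraphChrom (hD : ∀ v, ¬D v v) {k : ℕ}
    (h : ∀ n (f : V → Fin n), (∀ i, IsAcyclicOn D {v | f v = i}) → k < n) :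
    k < digraphChrom D := by
  have hne : {n | ∃ f : V → Fin n, ∀ i, IsAcyclicOn D {v | f v = i}}.Nonempty :=
    ⟨_, exists_isAcyclicOn_fiber_card hD⟩
  obtain ⟨f, hf⟩ := Nat.sInf_mem hne
  exact h _ f hf

theorem IsOrientation.digraphChrom_le_dichromatic {G : SimpleGraph V} (hD : IsOrientation G D) :
    digraphChrom D ≤ dichromatic G :=
  le_csSup ⟨Fintype.card V, by rintro _ ⟨D', hD', rfl⟩; exact digraphChrom_le_card hD'.irrefl⟩
    ⟨D, hD, rfl⟩

end Dichromatic

section BlowupOrientation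

variable {α : Type*} [LinearOrder α] {m : ℕ}

def blowupOrientation (H : SimpleGraph α) (W : Fin m → Fin m → Bool) (p q : α × Fin m) :
    Prop :=
  H.Adj p.1 q.1 ∧ (p.1 < q.1 ∧ W p.2 q.2 = true ∨ q.1 < p.1 ∧ W q.2 p.2 = false)

theorem isOrientation_blowupOrientation (H : SimpleGraph α) (W : Fin m → Fin m → Bool) :
    IsOrientation (blowup H m) (blowupOrientation H W) := by
  refine ⟨fun _ _ h => h.1, fun p q (hpq : H.Adj p.1 q.1) => ?_⟩
  rcases hpq.ne.lt_or_gt with h | h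
  · simp [blowupOrientation, hpq, hpq.symm, h, h.not_gt]
  · simp [blowupOrientation, hpq, hpq.symm, h, h.not_gt]

variable {H : SimpleGraph α} {W : Fin m → Fin m → Bool}

theorem hasDirCycleOn_blowupOrientation {u v : α} (huv : H.Adj u v) (hlt : u < v)
    {A B : Finset (Fin m)} (hW : HasFourCycle W A B) {S : Set (α × Fin m)}
    (hA : ∀ x ∈ A, (u, x) ∈ S) (hB : ∀ y ∈ B, (v, y) ∈ S) :
    HasDirCycleOn (blowupOrientation H W) S := by
  obtain ⟨x, hx, x', hx', y, hy, y', hy', h₁, h₂, h₃, h₄⟩ := hW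
  have up {x y} (h : W x y = true) : blowupOrientation H W (u, x) (v, y) :=
    ⟨huv, .inl ⟨hlt, h⟩⟩
  have down {x y} (h : W x y = false) : blowupOrientation H W (v, y) (u, x) :=
    ⟨huv.symm, .inr ⟨hlt, h⟩⟩
  exact ⟨(u, x), hA x hx,
    .tail (.tail (.tail (.single ⟨hA x hx, hB y hy, up h₁⟩) ⟨hB y hy, hA x' hx', down h₂⟩)
      ⟨hA x' hx', hB y' hy', up h₃⟩) ⟨hB y' hy', hA x hx, down h₄⟩⟩

theorem colorable_of_isAcyclicOn_blowupOrientation {n t : ℕ}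
    (hW : ∀ A B : Finset (Fin m), t ≤ #A → t ≤ #B → HasFourCycle W A B)
    (hnt : n * (t - 1) < m)
    (f : α × Fin m → Fin n) (hf : ∀ i, IsAcyclicOn (blowupOrientation H W) {p | f p = i}) :
    H.Colorable n := by
  have hfiber (u : α) : ∃ i, t ≤ #{x | f (u, x) = i} := by
    obtain ⟨i, hi⟩ := Fintype.exists_lt_card_fiber_of_mul_lt_card (fun x => f (u, x))
      (by simpa using hnt)
    exact ⟨i, by omega⟩
  choose c hc using hfiber
  refine ⟨SimpleGraph.Coloring.mk c fun {u v} huv hcuv => ?_⟩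
  wlog hlt : u < v generalizing u v
  · exact this huv.symm hcuv.symm (huv.ne.symm.lt_of_le (not_lt.1 hlt))
  obtain ⟨p, hp, hcyc⟩ := hasDirCycleOn_blowupOrientation huv hlt (hW _ _ (hc u) (hc v))
    (S := {p | f p = c u}) (fun x hx => (mem_filter.1 hx).2)
    (fun y hy => (mem_filter.1 hy).2.trans hcuv.symm)
  exact hf _ p hp hcyc

end BlowupOrientation

theorem four_mul_sq_le_two_pow_of_logb_le {m t : ℕ} (hm : 0 < m)
    (h : 2 + 2 * Real.logb 2 m ≤ t) : 4 * m ^ 2 ≤ 2 ^ t := by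
  have hm' : (0 : ℝ) < m := by exact_mod_cast hm
  have hlog : Real.logb 2 (4 * m ^ 2) = 2 + 2 * Real.logb 2 m := by
    rw [Real.logb_mul (by norm_num) (by positivity), Real.logb_pow,
      show (4 : ℝ) = 2 ^ (2 : ℕ) by norm_num, Real.logb_pow, Real.logb_self_eq_one one_lt_two]
    push_cast; ring
  have := (Real.logb_le_iff_le_rpow one_lt_two (by positivity)).1 (hlog ▸ h)
  rw [Real.rpow_natCast] at this
  exact_mod_cast this

theorem mul_ceil_div_sub_one_lt {k m : ℕ} (hk : 0 < k) (hm : 0 < m) :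
    k * (⌈(m : ℝ) / k⌉₊ - 1) < m := by
  have hk' : (0 : ℝ) < k := by exact_mod_cast hk
  have hpos : 0 < ⌈(m : ℝ) / k⌉₊ := Nat.ceil_pos.2 (by positivity)
  have := (lt_div_iff₀ hk').1 (Nat.lt_ceil.1 (Nat.sub_lt hpos one_pos))
  rw [mul_comm]
  exact_mod_cast this

theorem dichromatic_blowup_gt_general {α : Type*} [Fintype α]
    (k m : ℕ) (hk : 0 < k) (hm : 0 < m)
    (h : 2 + 2 * Real.logb 2 (m : ℝ) ≤ (⌈(m : ℝ) / (k : ℝ)⌉₊ : ℝ))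
    (H : SimpleGraph α) (hH : (k : ℕ∞) < H.chromaticNumber) :
    k < dichromatic (blowup H m) := by
  let _ : LinearOrder α := LinearOrder.lift' _ (Fintype.equivFin α).injective
  obtain ⟨W, hW⟩ := exists_forall_hasFourCycle hm (four_mul_sq_le_two_pow_of_logb_le hm h)
  have hD := isOrientation_blowupOrientation H W
  refine (lt_digraphChrom hD.irrefl fun n f hf => ?_).trans_le hD.digraphChrom_le_dichromatic
  by_contra! hnk
  have hcol := colorable_of_isAcyclicOn_blowupOrientation hW
    ((Nat.mul_le_mul_right _ hnk).trans_lt (mul_ceil_div_sub_one_lt hk hm)) f hf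
  exact hH.not_ge (hcol.mono hnk).chromaticNumber_le

/-- **Lemma 3.2.** If `2 + 2 log₂ m ≤ ⌈m/k⌉` and `χ(H) > k`, then the
dichromatic number of the blow-up `H^(m)` is greater than `k`. -/
theorem dichromatic_blowup_gt {α : Type*} [Fintype α] [DecidableEq α]
    (k m : ℕ) (hk : 0 < k) (hm : 0 < m)
    (h : 2 + 2 * Real.logb 2 (m : ℝ) ≤ (⌈(m : ℝ) / (k : ℝ)⌉₊ : ℝ))
    (H : SimpleGraph α) (hH : (k : ℕ∞) < H.chromaticNumber) :
    k < dichromatic (blowup H m) :=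
  dichromatic_blowup_gt_general k m hk hm h H hH
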